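/- For every field F, all elements x, w, y, z of the common meadow enlargement Option F of F, and all positive natural numbers g and h, the identity (x + 0·w) / (y · z^g) = (x · z^h + 0·w) / (y · z^{g+h}) holds. -/
import Mathlib


universe u

namespace CommonMeadow

/-- Addition on the common meadow enlargement `Option F` of a field `F`. -/
def cmAdd {F : Type u} [Field F] : Option F → Option F → Option F
  | some a, some b => some (a + b)
  | _, _ => none

/-- Multiplication on the common meadow enlargement `Option F` of a field `F`. -/
def cmMul {F : Type u} [Field F] : Option F → Option F → Option F
  | some a, some b => some (a * b)
  | _, _ => none

/-- Negation on the common meadow enlargement `Option F` of a field `F`. -/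
def cmNeg {F : Type u} [Field F] : Option F → Option F
  | some a => some (-a)
  | none => none

open Classical in
/-- Division on the common meadow enlargement `Option F` of a field `F`:
`x / y = ⊥` if `x = ⊥` or `y = ⊥` or `y = 0`, and `x / y = x * y⁻¹` otherwise. -/
noncomputable def cmDiv {F : Type u} [Field F] : Option F → Option F → Option F
  | some a, some b => if b = 0 then none else some (a * b⁻¹)
  | _, _ => none

/-- Powers with positive natural exponents in the common meadow enlargement
(iterated `cmMul`). -/
def cmPow {F : Type u} [Field F] (x : Option F) : ℕ → Option F
  | 0 => some 1
  | k + 1 => cmMul (cmPow x k) x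

end CommonMeadow


open CommonMeadow in
lemma cmPow_some {F : Type u} [Field F] (a : F) (n : ℕ) :
    cmPow (some a) n = some (a ^ n) := by
  induction n with
  | zero => simp [cmPow]
  | succ k ih => simp [cmPow, ih, cmMul, pow_succ]

open CommonMeadow in
lemma cmPow_none {F : Type u} [Field F] (n : ℕ) (hn : 0 < n) :
    cmPow (none : Option F) n = none := by
  cases n with
  | zero => omega
  | succ k => cases hk : cmPow (none : Option F) k <;> simp [cmPow, hk, cmMul]

open CommonMeadow in
/-- In the common meadow enlargement of any field, for positive natural numbers
`g` and `h`, `(x + 0·w) / (y · z^g) = (x · z^h + 0·w) / (y · z^{g+h})`. -/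
theorem div_pow_shift (F : Type u) [Field F] (x w y z : Option F) (g h : ℕ)
    (hg : 0 < g) (hh : 0 < h) :
    cmDiv (cmAdd x (cmMul (some 0) w)) (cmMul y (cmPow z g)) =
      cmDiv (cmAdd (cmMul x (cmPow z h)) (cmMul (some 0) w)) (cmMul y (cmPow z (g + h))) := by

  cases x with
  | none => cases w <;> cases y <;> cases z <;>
      simp [cmAdd, cmMul, cmDiv, cmPow_some, cmPow_none, hg, hh, Nat.add_pos_left hg h]
  | some a =>
  cases w with
  | none => cases y <;> cases z <;>
      simp [cmAdd, cmMul, cmDiv, cmPow_some, cmPow_none, hg, hh, Nat.add_pos_left hg h]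
  | some b =>
  cases y with
  | none => cases z <;>
      simp [cmAdd, cmMul, cmDiv, cmPow_some, cmPow_none, hg, hh, Nat.add_pos_left hg h]
  | some c =>
  cases z with
  | none => simp [cmAdd, cmMul, cmDiv, cmPow_none, hg, hh, Nat.add_pos_left hg h]
  | some d =>
    simp only [cmAdd, cmMul, cmDiv, cmPow_some]
    by_cases hd : d = 0
    · subst hd
      simp [zero_pow hg.ne', zero_pow (Nat.add_pos_left hg h).ne']
    · by_cases hc : c = 0
      · simp [hc]
      · rw [if_neg (by simp [hc, hd]), if_neg (by simp [hc, hd])]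
        congr 1
        field_simp
        ring
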